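/- If T is a tree, v ∈ V(T), and T_v is a subtree of T rooted at v such that T_v contains a path on k vertices but T_v − v does not, then ψ_k(T) = ψ_k(T ∖ T_v) + 1. -/

import Mathlib

open SimpleGraph

variable {V : Type*}

/-- `S` is a `k`-path vertex cover of `G`: every path on `k` vertices meets `S`. -/
def IsPathVC (G : SimpleGraph V) (k : ℕ) (S : Set V) : Prop :=
  ∀ ⦃u v : V⦄ (w : G.Walk u v), w.IsPath → w.length + 1 = k → ∃ x ∈ w.support, x ∈ S

/-- `psi G k` is the minimum cardinality of a `k`-path vertex cover of `G`. -/
noncomputable def psi (G : SimpleGraph V) (k : ℕ) : ℕ :=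
  sInf {n | ∃ S : Set V, IsPathVC G k S ∧ S.ncard = n}

/-!
Every `k`-path avoiding `v` lies entirely inside `T_v - v` or entirely outside `T_v`, because
a walk leaving `T_v` must pass through `v`. Since `T_v - v` has no `k`-path, a minimum cover of
`T ∖ T_v` together with `v` covers `T`. Conversely a minimum cover of `T` splits into covers of
`T_v` and of `T ∖ T_v`, and the first is nonempty because `T_v` contains a `k`-path.
-/

lemma Set.ncard_preimage_val {α : Type*} (s t : Set α) :
    (((↑) : s → α) ⁻¹' t).ncard = (s ∩ t).ncard := by
  rw [← Subtype.image_preimage_coe, Set.ncard_image_of_injective _ Subtype.val_injective]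

namespace SimpleGraph.Walk

variable {W : Type*} {G : SimpleGraph W} {s : Set W} {a b : W}

@[simp]
lemma length_induce (p : G.Walk a b) (hp : ∀ x ∈ p.support, x ∈ s) :
    (p.induce s hp).length = p.length := by
  have h := congrArg length (map_induce p hp)
  rwa [length_map] at h

lemma IsPath.induce {p : G.Walk a b} (hp : p.IsPath) (hs : ∀ x ∈ p.support, x ∈ s) :
    (p.induce s hs).IsPath :=
  IsPath.of_map (f := (Embedding.induce s).toHom) (by rwa [map_induce])

end SimpleGraph.Walk

section PathCover

variable {W : Type*} {G : SimpleGraph W} {k : ℕ}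

lemma IsPathVC.preimage_val {C : Set W} (hC : IsPathVC G k C) (s : Set W) :
    IsPathVC (G.induce s) k (Subtype.val ⁻¹' C) := by
  intro a b q hq hk
  obtain ⟨x, hx, hxC⟩ := hC (q.map (Embedding.induce s).toHom)
    (hq.map Subtype.val_injective) (by rwa [Walk.length_map])
  obtain ⟨z, hz, rfl⟩ := List.mem_map.mp (by rwa [Walk.support_map] at hx)
  exact ⟨z, hz, hxC⟩

lemma psi_le_ncard {C : Set W} (hC : IsPathVC G k C) : psi G k ≤ C.ncard :=
  Nat.sInf_le ⟨C, hC, rfl⟩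

lemma exists_isPathVC_ncard_eq_psi (G : SimpleGraph W) (k : ℕ) :
    ∃ C, IsPathVC G k C ∧ C.ncard = psi G k :=
  Nat.sInf_mem (s := {n | ∃ C, IsPathVC G k C ∧ C.ncard = n})
    ⟨_, Set.univ, fun a _ w _ _ => ⟨a, w.start_mem_support, trivial⟩, rfl⟩

lemma psi_le_psi_induce_add_one {s : Set W} {v : W}
    (h : ∀ ⦃a b : W⦄ (p : G.Walk a b), p.IsPath → p.length + 1 = k → v ∉ p.support →
      ∀ x ∈ p.support, x ∈ s) :
    psi G k ≤ psi (G.induce s) k + 1 := by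
  obtain ⟨C, hC, hCcard⟩ := exists_isPathVC_ncard_eq_psi (G.induce s) k
  have hcover : IsPathVC G k (insert v (Subtype.val '' C)) := by
    intro a b p hp hk
    by_cases hv : v ∈ p.support
    · exact ⟨v, hv, Set.mem_insert v _⟩
    have hs := h p hp hk hv
    obtain ⟨z, hz, hzC⟩ := hC (p.induce s hs) (hp.induce hs) (by rwa [Walk.length_induce])
    rw [Walk.support_induce, List.mem_attachWith] at hz
    exact ⟨z, hz, Set.mem_insert_of_mem v ⟨z, hzC, rfl⟩⟩
  calc psi G k ≤ (insert v (Subtype.val '' C)).ncard := psi_le_ncard hcover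
    _ ≤ (Subtype.val '' C).ncard + 1 := Set.ncard_insert_le v _
    _ = psi (G.induce s) k + 1 := by
        rw [Set.ncard_image_of_injective C Subtype.val_injective, hCcard]

variable [Finite W]

lemma one_le_psi {x y : W} (w : G.Walk x y) (hw : w.IsPath) (hk : w.length + 1 = k) :
    1 ≤ psi G k := by
  obtain ⟨C, hC, hCcard⟩ := exists_isPathVC_ncard_eq_psi G k
  obtain ⟨z, -, hzC⟩ := hC w hw hk
  rw [← hCcard, Nat.one_le_iff_ne_zero, ← Nat.pos_iff_ne_zero, Set.ncard_pos C.toFinite]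
  exact ⟨z, hzC⟩

lemma psi_induce_add_psi_induce_compl_le (s : Set W) :
    psi (G.induce s) k + psi (G.induce sᶜ) k ≤ psi G k := by
  obtain ⟨C, hC, hCcard⟩ := exists_isPathVC_ncard_eq_psi G k
  calc psi (G.induce s) k + psi (G.induce sᶜ) k
      ≤ (((↑) : s → W) ⁻¹' C).ncard + (((↑) : ↥sᶜ → W) ⁻¹' C).ncard :=
        add_le_add (psi_le_ncard (hC.preimage_val s)) (psi_le_ncard (hC.preimage_val sᶜ))
    _ = (C ∩ s).ncard + (C \ s).ncard := by
        rw [Set.ncard_preimage_val, Set.ncard_preimage_val, Set.inter_comm s C,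
          Set.inter_comm sᶜ C, ← Set.sdiff_eq]
    _ = psi G k := by rw [Set.ncard_inter_add_ncard_sdiff_eq_ncard C s, hCcard]

end PathCover

section Separation

variable {W : Type*} {G : SimpleGraph W} {u v : W} {S : Set W}

lemma mem_of_walk_of_notMem_support
    (hS : ∀ w : W, w ∈ S ↔ ∀ (p : G.Walk u w), p.IsPath → v ∈ p.support)
    {x y : W} (hx : x ∈ S) (q : G.Walk x y) (hq : v ∉ q.support) : y ∈ S := by
  classical
  by_contra hy
  obtain ⟨p, hp, hpv⟩ : ∃ p : G.Walk u y, p.IsPath ∧ v ∉ p.support := by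
    simpa [hS y] using hy
  have hvr := (hS x).mp hx _ (p.append q.reverse).bypass_isPath
  have hv := (p.append q.reverse).support_bypass_subset_support hvr
  rw [Walk.mem_support_append_iff, Walk.support_reverse, List.mem_reverse] at hv
  exact hv.elim hpv hq

lemma support_subset_of_notMem_support
    (hS : ∀ w : W, w ∈ S ↔ ∀ (p : G.Walk u w), p.IsPath → v ∈ p.support)
    {a b : W} (p : G.Walk a b) (hv : v ∉ p.support) {x : W} (hx : x ∈ p.support)
    (hxS : x ∈ S) : ∀ y ∈ p.support, y ∈ S := by
  classical
  have avoids {y : W} (hy : y ∈ p.support) : v ∉ (p.takeUntil y hy).support :=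
    fun h => hv (p.support_takeUntil_subset_support hy h)
  have haS : a ∈ S := mem_of_walk_of_notMem_support hS hxS (p.takeUntil x hx).reverse
    (by rw [Walk.support_reverse, List.mem_reverse]; exact avoids hx)
  exact fun y hy => mem_of_walk_of_notMem_support hS haS (p.takeUntil y hy) (avoids hy)

end Separation

theorem psi_tree_recursion_general [Fintype V] (T : SimpleGraph V) (k : ℕ)
    (u v : V) (S : Set V)
    -- `S` is the vertex set of `T_v`: the set of vertices `w` whose (unique) path
    -- from the root `u` passes through `v`, i.e. `v` together with its descendants.
    (hS : ∀ w : V, w ∈ S ↔ ∀ (p : T.Walk u w), p.IsPath → v ∈ p.support)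
    -- `T_v` contains a path on `k` vertices
    (h1 : ∃ (x y : ↥S) (w : (T.induce S).Walk x y), w.IsPath ∧ w.length + 1 = k)
    -- `T_v − v` contains no path on `k` vertices
    (h2 : ¬ ∃ (x y : ↥(S \ {v})) (w : (T.induce (S \ {v})).Walk x y),
      w.IsPath ∧ w.length + 1 = k) :
    psi T k = psi (T.induce Sᶜ) k + 1 := by
  have hpaths : ∀ ⦃a b : V⦄ (p : T.Walk a b), p.IsPath → p.length + 1 = k →
      v ∉ p.support → ∀ x ∈ p.support, x ∈ Sᶜ := by
    intro a b p hp hk hv x hx hxS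
    have hsub : ∀ y ∈ p.support, y ∈ S \ {v} := fun y hy =>
      ⟨support_subset_of_notMem_support hS p hv hx hxS y hy, fun h => hv (h ▸ hy)⟩
    exact h2 ⟨_, _, p.induce _ hsub, hp.induce hsub, by rwa [Walk.length_induce]⟩
  obtain ⟨x, y, w, hw, hk⟩ := h1
  have hpos := one_le_psi w hw hk
  have hsplit := psi_induce_add_psi_induce_compl_le (G := T) (k := k) S
  have hupper := psi_le_psi_induce_add_one hpaths
  omega

theorem psi_tree_recursion [Fintype V] (T : SimpleGraph V) (hT : T.IsTree) (k : ℕ)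
    (u v : V) (S : Set V)
    -- `S` is the vertex set of `T_v`: the set of vertices `w` whose (unique) path
    -- from the root `u` passes through `v`, i.e. `v` together with its descendants.
    (hS : ∀ w : V, w ∈ S ↔ ∀ (p : T.Walk u w), p.IsPath → v ∈ p.support)
    -- `T_v` contains a path on `k` vertices
    (h1 : ∃ (x y : ↥S) (w : (T.induce S).Walk x y), w.IsPath ∧ w.length + 1 = k)
    -- `T_v − v` contains no path on `k` vertices
    (h2 : ¬ ∃ (x y : ↥(S \ {v})) (w : (T.induce (S \ {v})).Walk x y),
      w.IsPath ∧ w.length + 1 = k) :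
    psi T k = psi (T.induce Sᶜ) k + 1 :=
  psi_tree_recursion_general T k u v S hS h1 h2
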